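/- arXiv:1309.7567 — 4 statements merged into one kernel-verified Lean document; each statement's English description precedes it below -/
import Mathlib

section
/- For every integer n ≥ 3, f(n+1) = f(n) or f(n+1) = f(n) + 1. -/
/-! The row sum `2 ^ n = ∑ₖ C(n, k)` has `n + 1` terms, each at most the middle one and
the first strictly smaller, so `f n ≤ n / 2`. Writing `a = f n`, the identity
`C(n + 1, a + 1) = (n + 1) / (a + 1) · C(n, a)` together with `2 (a + 1) ≤ n + 2` shows that
`a + 1` qualifies for `n + 1`; symmetrically `C(n, b) = (n + 1 - b) / (n + 1) · C(n + 1, b)`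
shows that `b = f (n + 1)` qualifies for `n` as long as `2 b ≤ n`, while `2 b > n` forces
`f n ≤ n / 2 < b`. -/

noncomputable def f (n : ℕ) : ℕ :=
  sInf {k : ℕ | 0 < k ∧ (n.choose k : ℝ) > 2 ^ n / (n + 1)}

open Finset in
theorem Nat.two_pow_lt_succ_mul_choose_half {n : ℕ} (hn : 2 ≤ n) :
    2 ^ n < (n + 1) * n.choose (n / 2) := by
  have h_first : n.choose 0 < n.choose (n / 2) :=
    calc n.choose 0 = 1 := n.choose_zero_right
      _ < n.choose 1 := by rw [Nat.choose_one_right]; omega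
      _ ≤ n.choose (n / 2) := Nat.choose_le_middle 1 n
  calc 2 ^ n = ∑ k ∈ range (n + 1), n.choose k := (Nat.sum_range_choose n).symm
    _ < ∑ _k ∈ range (n + 1), n.choose (n / 2) :=
        sum_lt_sum (fun k _ => Nat.choose_le_middle k n) ⟨0, by simp, h_first⟩
    _ = (n + 1) * n.choose (n / 2) := by simp

theorem Nat.two_pow_succ_lt_mul_choose_succ {n a : ℕ} (ha : 2 * a ≤ n)
    (h : 2 ^ n < (n + 1) * n.choose a) : 2 ^ (n + 1) < (n + 2) * (n + 1).choose (a + 1) := by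
  refine Nat.lt_of_mul_lt_mul_right (a := a + 1) ?_
  calc 2 ^ (n + 1) * (a + 1) = 2 ^ n * (2 * (a + 1)) := by ring
    _ ≤ 2 ^ n * (n + 2) := Nat.mul_le_mul_left _ (by omega)
    _ < (n + 1) * n.choose a * (n + 2) := Nat.mul_lt_mul_of_pos_right h (by omega)
    _ = (n + 2) * (n + 1).choose (a + 1) * (a + 1) := by
        rw [Nat.add_one_mul_choose_eq]; ring

theorem Nat.two_pow_lt_mul_choose_of_succ {n b : ℕ} (hb : 2 * b ≤ n)
    (h : 2 ^ (n + 1) < (n + 2) * (n + 1).choose b) : 2 ^ n < (n + 1) * n.choose b := by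
  refine Nat.lt_of_mul_lt_mul_right (a := n + 2) ?_
  calc 2 ^ n * (n + 2) ≤ 2 ^ n * (2 * (n + 1 - b)) := Nat.mul_le_mul_left _ (by omega)
    _ = 2 ^ (n + 1) * (n + 1 - b) := by ring
    _ < (n + 2) * (n + 1).choose b * (n + 1 - b) := Nat.mul_lt_mul_of_pos_right h (by omega)
    _ = (n + 1) * n.choose b * (n + 2) := by
        rw [mul_assoc, ← Nat.choose_mul_succ_eq]; ring

theorem choose_gt_two_pow_div_iff (n k : ℕ) :
    (n.choose k : ℝ) > 2 ^ n / (n + 1) ↔ 2 ^ n < (n + 1) * n.choose k := by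
  rw [gt_iff_lt, div_lt_iff₀ (by positivity), mul_comm]
  exact_mod_cast Iff.rfl

theorem f_le {n k : ℕ} (hk : 0 < k) (h : 2 ^ n < (n + 1) * n.choose k) : f n ≤ k :=
  Nat.sInf_le ⟨hk, (choose_gt_two_pow_div_iff n k).2 h⟩

theorem f_le_half {n : ℕ} (hn : 2 ≤ n) : f n ≤ n / 2 :=
  f_le (by omega) (Nat.two_pow_lt_succ_mul_choose_half hn)

theorem f_spec {n : ℕ} (hn : 2 ≤ n) : 0 < f n ∧ 2 ^ n < (n + 1) * n.choose (f n) := by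
  obtain ⟨hpos, hgt⟩ : f n ∈ {k : ℕ | 0 < k ∧ (n.choose k : ℝ) > 2 ^ n / (n + 1)} :=
    Nat.sInf_mem ⟨n / 2, by omega, (choose_gt_two_pow_div_iff n _).2
      (Nat.two_pow_lt_succ_mul_choose_half hn)⟩
  exact ⟨hpos, (choose_gt_two_pow_div_iff n _).1 hgt⟩

theorem f_succ_eq_or_succ (n : ℕ) (hn : 3 ≤ n) :
    f (n + 1) = f n ∨ f (n + 1) = f n + 1 := by
  have hn2 : 2 ≤ n := by omega
  obtain ⟨-, ha⟩ := f_spec hn2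
  obtain ⟨hb_pos, hb⟩ := f_spec (show 2 ≤ n + 1 by omega)
  have ha_half := f_le_half hn2
  have h_upper : f (n + 1) ≤ f n + 1 :=
    f_le (by omega) (Nat.two_pow_succ_lt_mul_choose_succ (by omega) ha)
  have h_lower : f n ≤ f (n + 1) := by
    rcases le_or_gt (2 * f (n + 1)) n with hb_half | hb_half
    · exact f_le hb_pos (Nat.two_pow_lt_mul_choose_of_succ hb_half hb)
    · omega
  omega
end

section
/- For every integer n ≥ 3, f(n) = L(n) or f(n) = L(n) − 1. -/
noncomputable def L (n : ℕ) : ℕ :=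
  sInf {k : ℕ | 0 < k ∧ (n.choose k : ℝ) > 2 ^ n / n}

theorem Nat.sInf_eq_or_eq_sInf_sub_one_of_subset {S T : Set ℕ} (hST : S ⊆ T) (hS : S.Nonempty)
    (hstep : sInf T ∉ S → sInf T + 1 ∈ S) : sInf T = sInf S ∨ sInf T = sInf S - 1 := by
  have hle : sInf T ≤ sInf S := Nat.sInf_le (hST (Nat.sInf_mem hS))
  by_cases hT : sInf T ∈ S
  · exact Or.inl (le_antisymm hle (Nat.sInf_le hT))
  · have hne : sInf T ≠ sInf S := fun h => hT (h ▸ Nat.sInf_mem hS)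
    have := Nat.sInf_le (hstep hT)
    omega

theorem two_pow_lt_mul_choose_half {n : ℕ} (hn : 3 ≤ n) : 2 ^ n < n * n.choose (n / 2) := by
  obtain ⟨k, rfl⟩ : ∃ k, n = k + 1 := ⟨n - 1, by omega⟩
  have hinner :
      ∑ i ∈ Finset.range k, (k + 1).choose (i + 1) ≤ k * (k + 1).choose ((k + 1) / 2) := by
    simpa using Finset.sum_le_card_nsmul (Finset.range k) _ _
      (fun i _ => Nat.choose_le_middle (i + 1) (k + 1))
  have hends : k + 1 ≤ (k + 1).choose ((k + 1) / 2) := by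
    simpa using Nat.choose_le_middle 1 (k + 1)
  have hsum : 2 ^ (k + 1) = ∑ i ∈ Finset.range k, (k + 1).choose (i + 1) + 2 := by
    rw [← Nat.sum_range_choose, Finset.sum_range_succ', Finset.sum_range_succ]
    simp only [Nat.choose_self, Nat.choose_zero_right]
  rw [hsum, add_mul, one_mul]
  omega

theorem succ_mul_choose_le_mul_choose_succ {n k : ℕ} (h : 2 * (k + 1) ≤ n) :
    (n + 1) * n.choose k ≤ n * n.choose (k + 1) := by
  have hratio : (n + 1) * (k + 1) ≤ n * (n - k) :=
    calc (n + 1) * (k + 1) ≤ n * (k + 2) := by nlinarith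
      _ ≤ n * (n - k) := Nat.mul_le_mul_left n (by omega)
  refine Nat.le_of_mul_le_mul_right ?_ k.succ_pos
  calc (n + 1) * n.choose k * (k + 1) = (n + 1) * (k + 1) * n.choose k := by ring
    _ ≤ n * (n - k) * n.choose k := Nat.mul_le_mul_right _ hratio
    _ = n * (n.choose (k + 1) * (k + 1)) := by rw [Nat.choose_succ_right_eq]; ring
    _ = n * n.choose (k + 1) * (k + 1) := by ring

theorem two_pow_div_lt_choose_half {n : ℕ} (hn : 3 ≤ n) :
    (2 : ℝ) ^ n / n < n.choose (n / 2) := by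
  rw [div_lt_iff₀ (by positivity), mul_comm]
  exact_mod_cast two_pow_lt_mul_choose_half hn

theorem two_pow_div_lt_choose_succ {n k : ℕ} (h : 2 * (k + 1) ≤ n)
    (hk : (2 : ℝ) ^ n / (n + 1) < n.choose k) : (2 : ℝ) ^ n / n < n.choose (k + 1) := by
  have hn : (0 : ℝ) < n := by exact_mod_cast (show 0 < n by omega)
  rw [div_lt_iff₀ (by positivity)] at hk
  rw [div_lt_iff₀ hn]
  have : ((n : ℝ) + 1) * n.choose k ≤ n * n.choose (k + 1) := by
    exact_mod_cast succ_mul_choose_le_mul_choose_succ h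
  linarith

theorem f_eq_L_or_pred (n : ℕ) (hn : 3 ≤ n) : f n = L n ∨ f n = L n - 1 := by
  have hmid : n / 2 ∈ {k : ℕ | 0 < k ∧ (n.choose k : ℝ) > 2 ^ n / n} :=
    ⟨by omega, two_pow_div_lt_choose_half hn⟩
  have hsub : {k : ℕ | 0 < k ∧ (n.choose k : ℝ) > 2 ^ n / n} ⊆
      {k : ℕ | 0 < k ∧ (n.choose k : ℝ) > 2 ^ n / (n + 1)} := fun k ⟨hk, hlt⟩ =>
    ⟨hk, (div_le_div_of_nonneg_left (by positivity) (by positivity) (by linarith)).trans_lt hlt⟩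
  refine Nat.sInf_eq_or_eq_sInf_sub_one_of_subset hsub ⟨_, hmid⟩
    fun (hf : f n ∉ _) => show f n + 1 ∈ _ from ?_
  have hf_mem : f n ∈ _ := Nat.sInf_mem ⟨_, hsub hmid⟩
  have hf_le : f n ≤ n / 2 := Nat.sInf_le (hsub hmid)
  have hf_ne : f n ≠ n / 2 := fun h => hf (h ▸ hmid)
  exact ⟨by omega, two_pow_div_lt_choose_succ (by omega) hf_mem.2⟩
end

section
/- Let n ≥ 3 be an integer and suppose C(n, L(n) − 1) > 2^n/(n+1). Then f(n) = f(n−1) = f(n−2) = L(n) − 1 and L(n) = L(n+1) = L(n+2) = f(n) + 1. -/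
theorem Nat.choose_le_choose_of_le_of_two_mul_le {n j k : ℕ} (hjk : j ≤ k) (hk : 2 * k ≤ n) :
    n.choose j ≤ n.choose k := by
  induction k, hjk using Nat.le_induction with
  | base => rfl
  | succ k _ ih => exact (ih (by omega)).trans (Nat.choose_le_succ_of_lt_half_left (by omega))

noncomputable def chooseThreshold (m c : ℕ) : ℕ :=
  sInf {k | 0 < k ∧ 2 ^ m < c * m.choose k}

theorem two_pow_div_lt_iff {m d x : ℕ} (hd : 0 < d) :
    2 ^ m / (d : ℝ) < x ↔ 2 ^ m < d * x := by
  rw [div_lt_iff₀ (by exact_mod_cast hd), mul_comm]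
  exact_mod_cast Iff.rfl

theorem f_eq_chooseThreshold (m : ℕ) : f m = chooseThreshold m (m + 1) := by
  unfold f chooseThreshold
  congr 1
  ext k
  exact and_congr_right fun _ => by exact_mod_cast two_pow_div_lt_iff m.succ_pos

theorem L_eq_chooseThreshold (m : ℕ) : L m = chooseThreshold m m := by
  unfold L chooseThreshold
  congr 1
  ext k
  refine and_congr_right fun hk => ?_
  rcases m.eq_zero_or_pos with rfl | hm
  · simp [Nat.choose_eq_zero_of_lt hk]
  · exact two_pow_div_lt_iff hm

section chooseThreshold

variable {m c : ℕ}

theorem chooseThreshold_mem (hpos : 0 < chooseThreshold m c) :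
    2 ^ m < c * m.choose (chooseThreshold m c) :=
  (Nat.sInf_mem (Nat.nonempty_of_pos_sInf hpos)).2

theorem mul_choose_le_of_lt_chooseThreshold {k : ℕ} (hk : 0 < k) (hlt : k < chooseThreshold m c) :
    c * m.choose k ≤ 2 ^ m :=
  not_lt.1 fun h => Nat.notMem_of_lt_sInf hlt ⟨hk, h⟩

-- Past the middle, `m - T` would be a smaller witness since `C(m, m - T) = C(m, T)`.
theorem two_mul_chooseThreshold_le (hc : c ≤ 2 ^ m) (hpos : 0 < chooseThreshold m c) :
    2 * chooseThreshold m c ≤ m := by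
  have hmem := chooseThreshold_mem hpos
  set T := chooseThreshold m c
  have hTm : T < m := by
    by_contra! hmT
    rcases hmT.lt_or_eq with hlt | heq
    · simp [Nat.choose_eq_zero_of_lt hlt] at hmem
    · rw [← heq, Nat.choose_self] at hmem
      omega
  by_contra! hgt
  have hsymm := mul_choose_le_of_lt_chooseThreshold (m := m) (c := c) (k := m - T)
    (by omega) (by omega)
  rw [Nat.choose_symm hTm.le] at hsymm
  omega

theorem chooseThreshold_eq_succ {b : ℕ} (hb : 2 * b ≤ m) (hbelow : c * m.choose b ≤ 2 ^ m)
    (habove : 2 ^ m < c * m.choose (b + 1)) : chooseThreshold m c = b + 1 := by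
  refine le_antisymm (Nat.sInf_le ⟨b.succ_pos, habove⟩)
    (le_csInf ⟨b + 1, b.succ_pos, habove⟩ ?_)
  rintro k ⟨hk, hlt⟩
  by_contra! hkb
  have hmono := Nat.choose_le_choose_of_le_of_two_mul_le (Nat.le_of_lt_succ hkb) hb
  have := Nat.mul_le_mul_left c hmono
  omega

end chooseThreshold

-- `b + 1` stands for `L n - 1`; writing it as a successor keeps truncated subtraction out.
structure ChooseWindow (n b : ℕ) : Prop where
  two_mul_add_four_le : 2 * b + 4 ≤ n
  mul_choose_le : n * n.choose (b + 1) ≤ 2 ^ n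
  lt_succ_mul_choose : 2 ^ n < (n + 1) * n.choose (b + 1)

theorem exists_chooseWindow {n : ℕ} (h : (n.choose (L n - 1) : ℝ) > 2 ^ n / (n + 1)) :
    ∃ b, L n = b + 2 ∧ ChooseWindow n b := by
  have hlt : 2 ^ n < (n + 1) * n.choose (L n - 1) := by
    exact_mod_cast (two_pow_div_lt_iff (d := n + 1) n.succ_pos).1 (by exact_mod_cast h)
  rw [L_eq_chooseThreshold] at hlt ⊢
  set T := chooseThreshold n n
  have hT : 2 ≤ T := by
    by_contra
    rw [show T - 1 = 0 by omega, Nat.choose_zero_right, mul_one] at hlt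
    exact absurd hlt (not_lt.2 n.lt_two_pow_self)
  have hhalf := two_mul_chooseThreshold_le n.lt_two_pow_self.le (by omega)
  have hle := mul_choose_le_of_lt_chooseThreshold (m := n) (c := n) (k := T - 1) (by omega)
    (by omega)
  refine ⟨T - 2, by omega, by omega, ?_, ?_⟩ <;> rwa [show T - 2 + 1 = T - 1 by omega]

namespace ChooseWindow

variable {n b : ℕ}

theorem f_eq (hw : ChooseWindow n b) : f n = b + 1 := by
  have hn := hw.two_mul_add_four_le
  obtain ⟨u, hu⟩ : ∃ u, n = b + u := ⟨n - b, by omega⟩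
  rw [f_eq_chooseThreshold]
  refine chooseThreshold_eq_succ (by omega) ?_ hw.lt_succ_mul_choose
  have hstep := Nat.choose_succ_right_eq n b
  rw [show n - b = u by omega] at hstep
  refine Nat.le_of_mul_le_mul_left (c := u) ?_ (by omega)
  calc u * ((n + 1) * n.choose b) = (n + 1) * (b + 1) * n.choose (b + 1) := by
        linear_combination (n + 1) * hstep.symm
    _ ≤ u * n * n.choose (b + 1) := Nat.mul_le_mul_right _ (by subst hu; nlinarith)
    _ ≤ u * 2 ^ n := by rw [mul_assoc]; exact Nat.mul_le_mul_left u hw.mul_choose_le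

theorem f_eq_of_succ (hw : ChooseWindow (n + 1) b) : f n = b + 1 := by
  have hn := hw.two_mul_add_four_le
  rw [f_eq_chooseThreshold]
  refine chooseThreshold_eq_succ (by omega) ?_ ?_
  · have hstep := Nat.add_one_mul_choose_eq n b
    refine Nat.le_of_mul_le_mul_left (c := 2) ?_ two_pos
    calc 2 * ((n + 1) * n.choose b) = 2 * (b + 1) * (n + 1).choose (b + 1) := by rw [hstep]; ring
      _ ≤ (n + 1) * (n + 1).choose (b + 1) := Nat.mul_le_mul_right _ (by omega)
      _ ≤ 2 ^ (n + 1) := hw.mul_choose_le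
      _ = 2 * 2 ^ n := by ring
  · have hstep := Nat.choose_mul_succ_eq n (b + 1)
    rw [show n + 1 - (b + 1) = n - b by omega] at hstep
    refine Nat.lt_of_mul_lt_mul_left (a := 2) ?_
    calc 2 * 2 ^ n = 2 ^ (n + 1) := by ring
      _ < (n + 1 + 1) * (n + 1).choose (b + 1) := hw.lt_succ_mul_choose
      _ ≤ 2 * (n - b) * (n + 1).choose (b + 1) := Nat.mul_le_mul_right _ (by omega)
      _ = 2 * ((n + 1) * n.choose (b + 1)) := by linear_combination 2 * hstep.symm

theorem f_eq_of_add_two (hw : ChooseWindow (n + 2) b) : f n = b + 1 := by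
  have hn := hw.two_mul_add_four_le
  obtain ⟨u, hu⟩ : ∃ u, n = b + u := ⟨n - b, by omega⟩
  have hstep₁ := Nat.choose_mul_succ_eq n (b + 1)
  have hstep₂ := Nat.choose_mul_succ_eq (n + 1) (b + 1)
  rw [show n + 1 - (b + 1) = u by omega] at hstep₁
  rw [show n + 1 + 1 - (b + 1) = u + 1 by omega] at hstep₂
  rw [f_eq_chooseThreshold]
  refine chooseThreshold_eq_succ (by omega) ?_ ?_
  · have hstep₀ := Nat.add_one_mul_choose_eq n b
    refine Nat.le_of_mul_le_mul_left (c := 4 * (n + 2)) ?_ (by omega)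
    calc 4 * (n + 2) * ((n + 1) * n.choose b)
        = 4 * (b + 1) * (u + 1) * (n + 2).choose (b + 1) := by
          linear_combination (4 * (n + 2)) * hstep₀ + (4 * (b + 1)) * hstep₂
      _ ≤ (n + 2) * (n + 2) * (n + 2).choose (b + 1) :=
          Nat.mul_le_mul_right _ ((four_mul_le_sq_add (b + 1) (u + 1)).trans_eq (by rw [hu]; ring))
      _ ≤ (n + 2) * 2 ^ (n + 2) := by rw [mul_assoc]; exact Nat.mul_le_mul_left _ hw.mul_choose_le
      _ = 4 * (n + 2) * 2 ^ n := by ring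
  · refine Nat.lt_of_mul_lt_mul_left (a := 4 * (n + 2)) ?_
    calc 4 * (n + 2) * 2 ^ n = (n + 2) * 2 ^ (n + 2) := by ring
      _ < (n + 2) * ((n + 2 + 1) * (n + 2).choose (b + 1)) :=
          Nat.mul_lt_mul_of_pos_left hw.lt_succ_mul_choose (by omega)
      _ ≤ 4 * u * (u + 1) * (n + 2).choose (b + 1) := by
          rw [← mul_assoc]; exact Nat.mul_le_mul_right _ (by subst hu; nlinarith)
      _ = 4 * (n + 2) * ((n + 1) * n.choose (b + 1)) := by
          linear_combination (4 * (n + 2)) * hstep₁.symm + (4 * u) * hstep₂.symm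

theorem L_succ_eq (hw : ChooseWindow n b) : L (n + 1) = b + 2 := by
  have hn := hw.two_mul_add_four_le
  obtain ⟨u, hu⟩ : ∃ u, n = b + u := ⟨n - b, by omega⟩
  rw [L_eq_chooseThreshold]
  refine chooseThreshold_eq_succ (by omega) ?_ ?_
  · have hstep := Nat.choose_mul_succ_eq n (b + 1)
    rw [show n + 1 - (b + 1) = u by omega] at hstep
    refine Nat.le_of_mul_le_mul_left (c := n * u) ?_ (Nat.mul_pos (by omega) (by omega))
    calc n * u * ((n + 1) * (n + 1).choose (b + 1))
        = (n + 1) * (n + 1) * (n * n.choose (b + 1)) := by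
          linear_combination (n * (n + 1)) * hstep.symm
      _ ≤ (n + 1) * (n + 1) * 2 ^ n := Nat.mul_le_mul_left _ hw.mul_choose_le
      _ ≤ 2 * n * u * 2 ^ n := Nat.mul_le_mul_right _ (by subst hu; nlinarith)
      _ = n * u * 2 ^ (n + 1) := by ring
  · have hstep := Nat.add_one_mul_choose_eq n (b + 1)
    refine Nat.lt_of_mul_lt_mul_left (a := b + 2) ?_
    calc (b + 2) * 2 ^ (n + 1) = 2 * (b + 2) * 2 ^ n := by ring
      _ < 2 * (b + 2) * ((n + 1) * n.choose (b + 1)) :=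
          Nat.mul_lt_mul_of_pos_left hw.lt_succ_mul_choose (by omega)
      _ ≤ (n + 1) * ((n + 1) * n.choose (b + 1)) := Nat.mul_le_mul_right _ (by omega)
      _ = (b + 2) * ((n + 1) * (n + 1).choose (b + 1 + 1)) := by rw [hstep]; ring

theorem L_add_two_eq (hw : ChooseWindow n b) : L (n + 2) = b + 2 := by
  have hn := hw.two_mul_add_four_le
  obtain ⟨u, hu⟩ : ∃ u, n = b + u := ⟨n - b, by omega⟩
  rw [L_eq_chooseThreshold]
  refine chooseThreshold_eq_succ (by omega) ?_ ?_
  · have hstep₁ := Nat.choose_mul_succ_eq n (b + 1)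
    have hstep₂ := Nat.choose_mul_succ_eq (n + 1) (b + 1)
    rw [show n + 1 - (b + 1) = u by omega] at hstep₁
    rw [show n + 1 + 1 - (b + 1) = u + 1 by omega] at hstep₂
    refine Nat.le_of_mul_le_mul_left (c := n * u * (u + 1)) ?_
      (Nat.mul_pos (Nat.mul_pos (by omega) (by omega)) u.succ_pos)
    calc n * u * (u + 1) * ((n + 2) * (n + 2).choose (b + 1))
        = (n + 2) * (n + 2) * (n + 1) * (n * n.choose (b + 1)) := by
          linear_combination
            (n * (n + 2) * (n + 2)) * hstep₁.symm + (n * u * (n + 2)) * hstep₂.symm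
      _ ≤ (n + 2) * (n + 2) * (n + 1) * 2 ^ n := Nat.mul_le_mul_left _ hw.mul_choose_le
      _ ≤ 4 * n * u * (u + 1) * 2 ^ n := Nat.mul_le_mul_right _ (by
          have hu₂ : (n + 4) * (n + 6) ≤ 2 * u * (2 * (u + 1)) :=
            Nat.mul_le_mul (by omega) (by omega)
          nlinarith [Nat.mul_le_mul_left n hu₂])
      _ = n * u * (u + 1) * 2 ^ (n + 2) := by ring
  · have hstep₁ : (n + 1) * n.choose (b + 1) = (n + 1).choose (b + 2) * (b + 2) :=
      Nat.add_one_mul_choose_eq n (b + 1)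
    have hstep₂ := Nat.choose_mul_succ_eq (n + 1) (b + 2)
    rw [show n + 1 + 1 - (b + 2) = u by omega] at hstep₂
    refine Nat.lt_of_mul_lt_mul_left (a := (b + 2) * u) ?_
    calc (b + 2) * u * 2 ^ (n + 2) = 4 * (b + 2) * u * 2 ^ n := by ring
      _ < 4 * (b + 2) * u * ((n + 1) * n.choose (b + 1)) :=
          Nat.mul_lt_mul_of_pos_left hw.lt_succ_mul_choose (Nat.mul_pos (by omega) (by omega))
      _ ≤ (n + 2) * (n + 2) * ((n + 1) * n.choose (b + 1)) :=
          Nat.mul_le_mul_right _ ((four_mul_le_sq_add (b + 2) u).trans_eq (by rw [hu]; ring))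
      _ = (b + 2) * u * ((n + 2) * (n + 2).choose (b + 2)) := by
          linear_combination ((n + 2) * (b + 2)) * hstep₂ + ((n + 2) * (n + 2)) * hstep₁

end ChooseWindow

theorem f_L_stability_general (n : ℕ)
    (h : (n.choose (L n - 1) : ℝ) > 2 ^ n / (n + 1)) :
    f n = L n - 1 ∧ f (n - 1) = L n - 1 ∧ f (n - 2) = L n - 1 ∧
    L n = f n + 1 ∧ L (n + 1) = f n + 1 ∧ L (n + 2) = f n + 1 := by
  obtain ⟨b, hL, hw⟩ := exists_chooseWindow h
  obtain ⟨m, rfl⟩ : ∃ m, n = m + 2 := ⟨n - 2, by have := hw.two_mul_add_four_le; omega⟩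
  rw [hL, hw.f_eq]
  exact ⟨rfl, hw.f_eq_of_succ, hw.f_eq_of_add_two, rfl, hw.L_succ_eq, hw.L_add_two_eq⟩

theorem f_L_stability (n : ℕ) (hn : 3 ≤ n)
    (h : (n.choose (L n - 1) : ℝ) > 2 ^ n / (n + 1)) :
    f n = L n - 1 ∧ f (n - 1) = L n - 1 ∧ f (n - 2) = L n - 1 ∧
    L n = f n + 1 ∧ L (n + 1) = f n + 1 ∧ L (n + 2) = f n + 1 :=
  f_L_stability_general n h
end

section
/- For every positive integer m, the binomial coefficient satisfies C(3m, m) < (27/4)^m = 2^{3m} · (27/32)^m. -/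
/-! `C(3m, m) · 2^(2m)` is one of the terms of the binomial expansion of `(1 + 2)^(3m) = 27^m`. -/

open Finset

/-- The `k = 0` term `y ^ n` of the binomial expansion makes the inequality strict. -/
theorem pow_mul_pow_mul_choose_lt_add_pow {R : Type*} [CommSemiring R] [PartialOrder R]
    [IsStrictOrderedRing R] {x y : R} (hx : 0 ≤ x) (hy : 0 < y) {n k : ℕ} (hk : k ≠ 0)
    (hkn : k ≤ n) : x ^ k * y ^ (n - k) * n.choose k < (x + y) ^ n := by
  rw [add_pow]
  apply single_lt_sum hk.symm (mem_range.2 (Nat.lt_succ_of_le hkn)) (mem_range.2 n.succ_pos)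
  · simpa using pow_pos hy n
  · intro j _ _
    positivity

theorem choose_three_mul_mul_four_pow_lt (m : ℕ) (hm : m ≠ 0) :
    (3 * m).choose m * 4 ^ m < 27 ^ m := by
  have h := pow_mul_pow_mul_choose_lt_add_pow (x := 1) (y := 2) zero_le_one two_pos hm
    (n := 3 * m) (by omega)
  rwa [one_pow, one_mul, show 3 * m - m = 2 * m by omega, pow_mul, pow_mul, mul_comm] at h

theorem choose_three_m_lt (m : ℕ) (hm : 1 ≤ m) :
    ((3 * m).choose m : ℝ) < (27 / 4) ^ m ∧
    ((27 : ℝ) / 4) ^ m = 2 ^ (3 * m) * (27 / 32) ^ m := by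
  constructor
  · have h : ((3 * m).choose m : ℝ) * 4 ^ m < 27 ^ m := by
      exact_mod_cast choose_three_mul_mul_four_pow_lt m (by omega)
    rwa [div_pow, lt_div_iff₀ (by positivity)]
  · rw [pow_mul, ← mul_pow]
    norm_num
end
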